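/- Let M = (M_1,…,M_d) be a d-outcome POVM on ℂ^d, let P be the computational-basis POVM with effects P_i = E_ii, and let D be the d-outcome POVM whose i-th effect D_i is the diagonal part of M_i (the diagonal matrix with the same diagonal entries as M_i). Then d_av^m(D, P) ≤ d_av^m(M, P). -/

import Mathlib

open Matrix ComplexOrder

/-- The Hilbert–Schmidt (Frobenius) norm of a complex matrix. -/
noncomputable def hsNorm {n : Type*} [Fintype n] (A : Matrix n n ℂ) : ℝ :=
  Real.sqrt ((Matrix.trace (Aᴴ * A)).re)

/-- A POVM: a tuple of positive semidefinite effects summing to the identity. -/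
def IsPOVM {n : Type*} [Fintype n] [DecidableEq n] {ι : Type*} [Fintype ι]
    (M : ι → Matrix n n ℂ) : Prop :=
  (∀ i, (M i).PosSemidef) ∧ ∑ i, M i = 1

/-- The average-case distance between POVMs on a `Fintype.card n`-dimensional space. -/
noncomputable def davM {n : Type*} [Fintype n] {ι : Type*} [Fintype ι]
    (M N : ι → Matrix n n ℂ) : ℝ :=
  (1 / (2 * (Fintype.card n : ℝ))) *
    ∑ i, Real.sqrt ((hsNorm (M i - N i)) ^ 2 + ((Matrix.trace (M i - N i)).re) ^ 2)

/-!
Taking the diagonal part of a matrix discards its off-diagonal entries, so it can only decrease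
the Hilbert–Schmidt norm, and it keeps the trace. Since each `E_ii` is diagonal, the diagonal
part of `M_i` minus `E_ii` is the diagonal part of `M_i - E_ii`, so every summand of `d_av^m`
decreases.
-/

namespace Matrix

lemma IsDiag.diagonal_diag_sub {n α : Type*} [AddGroup α] [DecidableEq n] (A : Matrix n n α)
    {B : Matrix n n α} (hB : B.IsDiag) : diagonal A.diag - B = diagonal (A - B).diag := by
  conv_lhs => rw [← hB.diagonal_diag]
  rw [diagonal_sub, diag_sub]
  rfl

variable {n : Type*} [Fintype n]

lemma re_trace_conjTranspose_mul_self (A : Matrix n n ℂ) :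
    (trace (Aᴴ * A)).re = ∑ j, ∑ i, Complex.normSq (A i j) := by
  simp only [trace, diag, mul_apply, conjTranspose_apply, Complex.re_sum, Complex.star_def,
    ← Complex.normSq_eq_conj_mul_self, Complex.ofReal_re]

lemma trace_diagonal_diag {α : Type*} [AddCommMonoid α] [DecidableEq n] (A : Matrix n n α) :
    trace (diagonal A.diag) = trace A :=
  trace_diagonal _

end Matrix

lemma hsNorm_nonneg {n : Type*} [Fintype n] (A : Matrix n n ℂ) : 0 ≤ hsNorm A :=
  Real.sqrt_nonneg _

lemma hsNorm_diagonal_diag_le {n : Type*} [Fintype n] [DecidableEq n] (A : Matrix n n ℂ) :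
    hsNorm (diagonal A.diag) ≤ hsNorm A := by
  unfold hsNorm
  rw [re_trace_conjTranspose_mul_self, re_trace_conjTranspose_mul_self]
  refine Real.sqrt_le_sqrt (Finset.sum_le_sum fun j _ => ?_)
  calc ∑ i, Complex.normSq (diagonal A.diag i j)
      = Complex.normSq (A j j) := by
        rw [Finset.sum_eq_single_of_mem j (Finset.mem_univ j)
          fun i _ hij => by simp [diagonal_apply_ne _ hij]]
        simp
    _ ≤ ∑ i, Complex.normSq (A i j) :=
        Finset.single_le_sum (f := fun i => Complex.normSq (A i j))
          (fun i _ => Complex.normSq_nonneg _) (Finset.mem_univ j)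

theorem davM_diagonal_diag_le {n ι : Type*} [Fintype n] [DecidableEq n] [Fintype ι]
    (M N : ι → Matrix n n ℂ) (hN : ∀ i, (N i).IsDiag) :
    davM (fun i => diagonal (M i).diag) N ≤ davM M N := by
  unfold davM
  simp_rw [fun i => (hN i).diagonal_diag_sub (M i), trace_diagonal_diag]
  gcongr with i
  · exact hsNorm_nonneg _
  · exact hsNorm_diagonal_diag_le _

theorem statement18_general (d : ℕ) (M : Fin d → Matrix (Fin d) (Fin d) ℂ) :
    davM (fun i : Fin d => Matrix.diagonal (fun k => M i k k))
        (fun i : Fin d => Matrix.single i i (1 : ℂ)) ≤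
      davM M (fun i : Fin d => Matrix.single i i (1 : ℂ)) :=
  davM_diagonal_diag_le M _ fun i => diagonal_single i (1 : ℂ) ▸ isDiag_diagonal _

theorem statement18 (d : ℕ) (M : Fin d → Matrix (Fin d) (Fin d) ℂ) (hM : IsPOVM M) :
    davM (fun i : Fin d => Matrix.diagonal (fun k => M i k k))
        (fun i : Fin d => Matrix.single i i (1 : ℂ)) ≤
      davM M (fun i : Fin d => Matrix.single i i (1 : ℂ)) :=
  statement18_general d M
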